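/- Suppose y = Ax + e where x ∈ ℝ^N is s-sparse with support S, A ∈ ℝ^{M×N} has AAᵀ invertible, γ_t denotes the preconditioned restricted isometry constant of A (the RIP constant of (AAᵀ)^{-1/2}A) and θ_t denotes the RIP constant of (AAᵀ)^{-1}A. If μ' ∈ ℝ^N is s'-sparse and T is an index set of the t ≥ s largest absolute entries of μ' + Aᵀ(AAᵀ)^{-1}(y - Aμ'), then ‖x_{T^c}‖₂ ≤ √2 (γ_{s+s'+t} ‖x - μ'‖₂ + √(1+θ_{t+s}) ‖e‖₂). -/

import Mathlib

open Matrix Finset Real MeasureTheory ProbabilityTheory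
open scoped BigOperators

noncomputable section

/-- squared Euclidean norm -/
def nsq {n : ℕ} (v : Fin n → ℝ) : ℝ := ∑ i, v i ^ 2

/-- Euclidean norm -/
def nrm {n : ℕ} (v : Fin n → ℝ) : ℝ := Real.sqrt (∑ i, v i ^ 2)

open Classical in
/-- support of a vector, as a finset -/
def suppF {n : ℕ} (x : Fin n → ℝ) : Finset (Fin n) :=
  Finset.univ.filter (fun i => x i ≠ 0)

/-- `x` is `s`-sparse -/
def Sparse {n : ℕ} (s : ℕ) (x : Fin n → ℝ) : Prop := (suppF x).card ≤ s

/-- `δ` is a restricted isometry constant of order `t` for `A`: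
`(1-δ)‖x‖² ≤ ‖Ax‖² ≤ (1+δ)‖x‖²` for all `t`-sparse `x`. -/
def IsRIP {M N : ℕ} (A : Matrix (Fin M) (Fin N) ℝ) (t : ℕ) (δ : ℝ) : Prop :=
  ∀ x : Fin N → ℝ, Sparse t x →
    (1 - δ) * nsq x ≤ nsq (A.mulVec x) ∧ nsq (A.mulVec x) ≤ (1 + δ) * nsq x

/-- restriction of a vector to an index set (zeroing entries outside it) -/
def restr {n : ℕ} (T : Finset (Fin n)) (x : Fin n → ℝ) : Fin n → ℝ :=
  fun i => if i ∈ T then x i else 0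

/-- submatrix of the columns of `A` indexed by `T` -/
def colSub {M N : ℕ} (A : Matrix (Fin M) (Fin N) ℝ) (T : Finset (Fin N)) :
    Matrix (Fin M) T ℝ :=
  fun i j => A i j.val

/-- the feedback step: `μ'_T = x_T + (A_Tᵀ A_T)⁻¹ A_Tᵀ A_{Tᶜ} x_{Tᶜ}`, `μ'_{Tᶜ} = 0`. -/
def feedback {M N : ℕ} (A : Matrix (Fin M) (Fin N) ℝ) (T : Finset (Fin N))
    (x : Fin N → ℝ) : Fin N → ℝ :=
  fun i => if h : i ∈ T then
    x i + ((((colSub A T)ᵀ * colSub A T)⁻¹ * (colSub A T)ᵀ).mulVec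
      (A.mulVec (restr Tᶜ x))) ⟨i, h⟩
  else 0

/-- `hatAbs x k` is the `k`-th largest absolute entry of `x` (1-based index). -/
def hatAbs {n : ℕ} (x : Fin n → ℝ) (k : ℕ) : ℝ :=
  if h : k - 1 < n then |x (Tuple.sort (fun i => -|x i|) ⟨k - 1, h⟩)| else 0

/-- `T` contains the indices of the `p` largest absolute entries of `x`. -/
def containsTop {n : ℕ} (x : Fin n → ℝ) (p : ℕ) (T : Finset (Fin n)) : Prop :=
  ∀ j : Fin n, (j : ℕ) < p → Tuple.sort (fun i => -|x i|) j ∈ T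

/-- The NST+HT+FB algorithm: `T k` is the set of the `s` largest absolute entries of the
feasible iterate `x^k`, `μ^k` is the thresholding-plus-feedback of `x^k` on `T k`, and
`x^{k+1} = μ^k + Aᵀ(AAᵀ)⁻¹(y - Aμ^k)` is the null space tuning step. -/
def NSTSpec {M N : ℕ} (A : Matrix (Fin M) (Fin N) ℝ) (y : Fin M → ℝ) (s : ℕ)
    (T : ℕ → Finset (Fin N)) (xs μ : ℕ → Fin N → ℝ) : Prop :=
  (∀ k, A.mulVec (xs k) = y) ∧
  (∀ k, (T k).card = s) ∧
  (∀ k, ∀ i ∈ T k, ∀ j ∉ T k, |xs k j| ≤ |xs k i|) ∧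
  (∀ k, μ k = feedback A (T k) (xs k)) ∧
  (∀ k, xs (k + 1) = μ k + (Aᵀ * (A * Aᵀ)⁻¹).mulVec (y - A.mulVec (μ k)))

/-- The adaptive AdptNST+HT+FB algorithm: identical to NST+HT+FB except that at step `k`
the index set `T k` consists of the `k` largest absolute entries of `x^k`. -/
def AdptSpec {M N : ℕ} (A : Matrix (Fin M) (Fin N) ℝ) (y : Fin M → ℝ)
    (T : ℕ → Finset (Fin N)) (xs μ : ℕ → Fin N → ℝ) : Prop :=
  (∀ k, A.mulVec (xs k) = y) ∧
  (∀ k, (T k).card = k) ∧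
  (∀ k, ∀ i ∈ T k, ∀ j ∉ T k, |xs k j| ≤ |xs k i|) ∧
  (∀ k, μ k = feedback A (T k) (xs k)) ∧
  (∀ k, xs (k + 1) = μ k + (Aᵀ * (A * Aᵀ)⁻¹).mulVec (y - A.mulVec (μ k)))

open scoped ComplexOrder in
/-- The positive semidefinite square root, as defined in Mathlib (Dec 2024), since removed. -/
def Matrix.PosSemidef.sqrt {n : Type*} [Fintype n] [DecidableEq n] {𝕜 : Type*} [RCLike 𝕜]
    {A : Matrix n n 𝕜} (hA : A.PosSemidef) : Matrix n n 𝕜 :=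
  hA.1.eigenvectorUnitary.1 * diagonal ((↑) ∘ (√·) ∘ hA.1.eigenvalues) *
    (star hA.1.eigenvectorUnitary : Matrix n n 𝕜)

/-!
Let `w = μ' + Aᵀ(AAᵀ)⁻¹(y - Aμ')`, `S = supp x`, `Δ = (T \ S) ∪ (S \ T)` (so `|Δ| ≤ t + s`) and
`Q = 1 - Aᵀ(AAᵀ)⁻¹A`, the orthogonal projection onto the null space of `A`.
Since `T` carries the `t ≥ |S|` largest entries of `w`, the energy of `w` on `S \ T` is at most
its energy on `T \ S`, where `w` agrees with `w - x`; hence `‖x_{Tᶜ}‖ ≤ √2 ‖(w - x)_Δ‖`.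
Now `w - x = Dᵀe - Q(x - μ')` with `D = (AAᵀ)⁻¹A`. Both terms are bounded by duality: for
`z = (Dᵀe)_Δ`, `‖z‖² = ⟨Dz, e⟩ ≤ √(1 + θ) ‖z‖ ‖e‖` by the RIP of `D`, and since `Q = QᵀQ` the same
argument gives `‖(Qu)_Δ‖ ≤ √γ ‖Qu‖ ≤ γ ‖u‖`, because `‖Qv‖² = ‖v‖² - ‖(AAᵀ)^{-1/2}Av‖² ≤ γ ‖v‖²`
for sparse `v`.
-/

namespace Matrix.PosSemidef

open scoped ComplexOrder

variable {n 𝕜 : Type*} [Fintype n] [DecidableEq n] [RCLike 𝕜] {A : Matrix n n 𝕜}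

lemma sqrt_mul_self (hA : A.PosSemidef) : hA.sqrt * hA.sqrt = A := by
  have hU := Unitary.coe_star_mul_self hA.1.eigenvectorUnitary
  conv_rhs => rw [hA.1.spectral_theorem, Unitary.conjStarAlgAut_apply]
  simp only [sqrt, Matrix.mul_assoc]
  rw [← Matrix.mul_assoc (star _) _, hU, Matrix.one_mul, ← Matrix.mul_assoc (diagonal _),
    diagonal_mul_diagonal]
  congr 3
  funext i
  simp [← RCLike.ofReal_mul, Real.mul_self_sqrt (hA.eigenvalues_nonneg i)]

lemma conjTranspose_sqrt (hA : A.PosSemidef) : hA.sqrtᴴ = hA.sqrt := by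
  simp only [sqrt, conjTranspose_mul, Matrix.mul_assoc, star_eq_conjTranspose,
    conjTranspose_conjTranspose, diagonal_conjTranspose]
  congr 3
  funext i
  simp

lemma transpose_sqrt_mul_mul_sqrt_mul {m : Type*} [Fintype m] {C : Matrix n n ℝ}
    (hC : C.PosSemidef) (A : Matrix n m ℝ) :
    (hC.sqrt * A)ᵀ * (hC.sqrt * A) = Aᵀ * C * A := by
  have hR : hC.sqrtᵀ = hC.sqrt := by
    rw [← conjTranspose_eq_transpose_of_trivial, hC.conjTranspose_sqrt]
  rw [transpose_mul, hR, Matrix.mul_assoc, ← Matrix.mul_assoc hC.sqrt, hC.sqrt_mul_self,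
    Matrix.mul_assoc]

end Matrix.PosSemidef

section EuclideanNorm

variable {m n : ℕ}

lemma nsq_nonneg (v : Fin n → ℝ) : 0 ≤ nsq v := sum_nonneg fun _ _ => sq_nonneg _

lemma nrm_nonneg (v : Fin n → ℝ) : 0 ≤ nrm v := Real.sqrt_nonneg _

lemma nrm_eq_sqrt_nsq (v : Fin n → ℝ) : nrm v = √(nsq v) := rfl

lemma nrm_sq (v : Fin n → ℝ) : nrm v ^ 2 = nsq v := Real.sq_sqrt (nsq_nonneg v)

lemma nsq_eq_dotProduct (v : Fin n → ℝ) : nsq v = v ⬝ᵥ v := by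
  simp [nsq, dotProduct, sq]

lemma nrm_eq_norm_toLp (v : Fin n → ℝ) : nrm v = ‖WithLp.toLp 2 v‖ := by
  simp [nrm, EuclideanSpace.norm_eq]

lemma nrm_sub_le (a b : Fin n → ℝ) : nrm (a - b) ≤ nrm a + nrm b := by
  simpa only [nrm_eq_norm_toLp, WithLp.toLp_sub] using norm_sub_le _ _

lemma dotProduct_le_nrm_mul_nrm (v w : Fin n → ℝ) : v ⬝ᵥ w ≤ nrm v * nrm w :=
  Real.sum_mul_le_sqrt_mul_sqrt _ _ _

lemma nrm_le_sqrt_mul_of_nsq_le {v : Fin m → ℝ} {w : Fin n → ℝ} {c : ℝ}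
    (h : nsq v ≤ c * nsq w) : nrm v ≤ √c * nrm w := by
  rw [nrm_eq_sqrt_nsq, nrm_eq_sqrt_nsq, ← Real.sqrt_mul' _ (nsq_nonneg w)]
  exact Real.sqrt_le_sqrt h

lemma nrm_le_of_nsq_le_mul_nrm {v : Fin n → ℝ} {c : ℝ} (hc : 0 ≤ c) (h : nsq v ≤ c * nrm v) :
    nrm v ≤ c := by
  rw [← nrm_sq, sq] at h
  rcases (nrm_nonneg v).eq_or_lt with h0 | h0
  · exact h0 ▸ hc
  · exact le_of_mul_le_mul_right h h0

lemma nsq_mulVec (B : Matrix (Fin m) (Fin n) ℝ) (z : Fin n → ℝ) :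
    nsq (B *ᵥ z) = z ⬝ᵥ ((Bᵀ * B) *ᵥ z) := by
  rw [nsq_eq_dotProduct, ← mulVec_mulVec, mulVec_transpose, dotProduct_comm z,
    ← dotProduct_mulVec]

end EuclideanNorm

section Restriction

variable {n : ℕ}

lemma restr_sub (T : Finset (Fin n)) (a b : Fin n → ℝ) :
    restr T (a - b) = restr T a - restr T b := by
  funext i; by_cases h : i ∈ T <;> simp [restr, h]

lemma nsq_restr (T : Finset (Fin n)) (v : Fin n → ℝ) : nsq (restr T v) = ∑ i ∈ T, v i ^ 2 := by
  simp [nsq, restr, ite_pow]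

lemma restr_dotProduct_self (T : Finset (Fin n)) (v : Fin n → ℝ) :
    restr T v ⬝ᵥ v = nsq (restr T v) := by
  simp [nsq_restr, dotProduct, restr, ite_mul, sq]

lemma Sparse.mono {s t : ℕ} {x : Fin n → ℝ} (hx : Sparse s x) (hst : s ≤ t) : Sparse t x :=
  hx.trans hst

lemma sparse_restr {T : Finset (Fin n)} {k : ℕ} (hT : T.card ≤ k) (v : Fin n → ℝ) :
    Sparse k (restr T v) := by
  refine (card_le_card fun i hi => ?_).trans hT
  by_contra h
  simp [suppF, restr, h] at hi

lemma sparse_sub {s s' : ℕ} {x y : Fin n → ℝ} (hx : Sparse s x) (hy : Sparse s' y) :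
    Sparse (s + s') (x - y) := by
  refine (card_le_card fun i hi => ?_).trans ((card_union_le _ _).trans (add_le_add hx hy))
  by_contra h
  simp_all [suppF]

end Restriction

section HardThresholding

lemma sum_sq_le_sum_sq_of_card_le {ι : Type*} {A B : Finset ι} (f : ι → ℝ)
    (hcard : A.card ≤ B.card) (h : ∀ j ∈ A, ∀ i ∈ B, |f j| ≤ |f i|) :
    ∑ j ∈ A, f j ^ 2 ≤ ∑ i ∈ B, f i ^ 2 := by
  rcases B.eq_empty_or_nonempty with rfl | hB
  · simp_all
  set c := B.inf' hB fun i => f i ^ 2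
  have hc : 0 ≤ c := (le_inf'_iff _ _).2 fun i _ => sq_nonneg (f i)
  have hA : ∀ j ∈ A, f j ^ 2 ≤ c := fun j hj =>
    (le_inf'_iff _ _).2 fun i hi => sq_le_sq.2 (h j hj i hi)
  calc ∑ j ∈ A, f j ^ 2 ≤ A.card • c := sum_le_card_nsmul _ _ _ hA
    _ ≤ B.card • c := nsmul_le_nsmul_left hc hcard
    _ ≤ ∑ i ∈ B, f i ^ 2 := card_nsmul_le_sum _ _ _ fun i hi => inf'_le _ hi

variable {n : ℕ}

lemma nrm_restr_add_nrm_restr_le {A B : Finset (Fin n)} (hAB : Disjoint A B) (v : Fin n → ℝ) :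
    nrm (restr A v) + nrm (restr B v) ≤ √2 * nrm (restr (A ∪ B) v) := by
  have hsum : nsq (restr (A ∪ B) v) = nsq (restr A v) + nsq (restr B v) := by
    simp only [nsq_restr, sum_union hAB]
  rw [nrm_eq_sqrt_nsq (restr (A ∪ B) v), ← Real.sqrt_mul zero_le_two, hsum, ← nrm_sq, ← nrm_sq]
  apply Real.le_sqrt_of_sq_le
  nlinarith [sq_nonneg (nrm (restr A v) - nrm (restr B v))]

theorem nrm_restr_compl_le_of_top {x w : Fin n → ℝ} {T : Finset (Fin n)}
    (hcard : (suppF x).card ≤ T.card) (htop : ∀ i ∈ T, ∀ j ∉ T, |w j| ≤ |w i|) :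
    nrm (restr Tᶜ x) ≤ √2 * nrm (restr ((T \ suppF x) ∪ (suppF x \ T)) (w - x)) := by
  set S := suppF x
  have hx : restr Tᶜ x = restr (S \ T) w - restr (S \ T) (w - x) := by
    rw [← restr_sub, sub_sub_cancel]
    funext i
    by_cases hi : x i = 0 <;> simp [restr, S, suppF, hi]
  have hw : restr (T \ S) w = restr (T \ S) (w - x) := by
    funext i
    by_cases hi : x i = 0 <;> simp [restr, S, suppF, hi]
  have hST : nrm (restr (S \ T) w) ≤ nrm (restr (T \ S) w) := by
    rw [nrm_eq_sqrt_nsq, nrm_eq_sqrt_nsq, nsq_restr, nsq_restr]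
    refine Real.sqrt_le_sqrt (sum_sq_le_sum_sq_of_card_le w
      (card_sdiff_le_card_sdiff_iff.2 hcard) fun j hj i hi => ?_)
    exact htop i (mem_sdiff.1 hi).1 j (mem_sdiff.1 hj).2
  calc nrm (restr Tᶜ x) ≤ nrm (restr (S \ T) w) + nrm (restr (S \ T) (w - x)) :=
        hx ▸ nrm_sub_le _ _
    _ ≤ nrm (restr (T \ S) (w - x)) + nrm (restr (S \ T) (w - x)) := by rw [← hw]; gcongr
    _ ≤ _ := nrm_restr_add_nrm_restr_le disjoint_sdiff_sdiff _

end HardThresholding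

section RowSpaceProjection

variable {m n : Type*} [Fintype m] [Fintype n] [DecidableEq m] (A : Matrix m n ℝ)

def rowSpaceProj : Matrix n n ℝ := Aᵀ * (A * Aᵀ)⁻¹ * A

lemma transpose_rowSpaceProj : (rowSpaceProj A)ᵀ = rowSpaceProj A := by
  simp [rowSpaceProj, transpose_mul, transpose_nonsing_inv, Matrix.mul_assoc]

lemma isIdempotentElem_rowSpaceProj (hA : IsUnit (A * Aᵀ)) :
    IsIdempotentElem (rowSpaceProj A) := by
  unfold IsIdempotentElem rowSpaceProj
  calc Aᵀ * (A * Aᵀ)⁻¹ * A * (Aᵀ * (A * Aᵀ)⁻¹ * A)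
      = Aᵀ * (A * Aᵀ)⁻¹ * ((A * Aᵀ) * (A * Aᵀ)⁻¹) * A := by simp only [Matrix.mul_assoc]
    _ = Aᵀ * (A * Aᵀ)⁻¹ * A := by
        rw [mul_nonsing_inv _ ((isUnit_iff_isUnit_det _).1 hA), Matrix.mul_one]

end RowSpaceProjection

section ProjectionBounds

variable {m n : ℕ}

lemma nsq_one_sub_mulVec {P : Matrix (Fin n) (Fin n) ℝ} (hPt : Pᵀ = P) (hP : IsIdempotentElem P)
    (z : Fin n → ℝ) : nsq ((1 - P) *ᵥ z) = nsq z - z ⬝ᵥ (P *ᵥ z) := by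
  rw [nsq_mulVec, transpose_sub, transpose_one, hPt, hP.one_sub.eq, sub_mulVec, one_mulVec,
    dotProduct_sub, nsq_eq_dotProduct]

lemma nrm_restr_transpose_mulVec_le (D : Matrix (Fin m) (Fin n) ℝ) (e : Fin m → ℝ)
    (Δ : Finset (Fin n)) {c : ℝ} (hc : 0 ≤ c)
    (hD : nrm (D *ᵥ restr Δ (Dᵀ *ᵥ e)) ≤ c * nrm (restr Δ (Dᵀ *ᵥ e))) :
    nrm (restr Δ (Dᵀ *ᵥ e)) ≤ c * nrm e := by
  set z := restr Δ (Dᵀ *ᵥ e)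
  refine nrm_le_of_nsq_le_mul_nrm (mul_nonneg hc (nrm_nonneg e)) ?_
  calc nsq z = z ⬝ᵥ (Dᵀ *ᵥ e) := (restr_dotProduct_self Δ _).symm
    _ = (D *ᵥ z) ⬝ᵥ e := by
        rw [mulVec_transpose, dotProduct_comm, ← dotProduct_mulVec, dotProduct_comm]
    _ ≤ nrm (D *ᵥ z) * nrm e := dotProduct_le_nrm_mul_nrm _ _
    _ ≤ c * nrm z * nrm e := by gcongr; exact nrm_nonneg e
    _ = c * nrm e * nrm z := by ring

lemma nrm_restr_mulVec_le_of_isIdempotentElem {Q : Matrix (Fin n) (Fin n) ℝ} (hQt : Qᵀ = Q)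
    (hQ : IsIdempotentElem Q) {γ : ℝ} (u : Fin n → ℝ) (Δ : Finset (Fin n))
    (hu : nsq (Q *ᵥ u) ≤ γ * nsq u)
    (hz : nsq (Q *ᵥ restr Δ (Q *ᵥ u)) ≤ γ * nsq (restr Δ (Q *ᵥ u))) :
    nrm (restr Δ (Q *ᵥ u)) ≤ γ * nrm u := by
  rcases lt_or_ge γ 0 with hγ | hγ
  · have hz0 : nsq (restr Δ (Q *ᵥ u)) ≤ 0 := by nlinarith [nsq_nonneg (Q *ᵥ restr Δ (Q *ᵥ u))]
    have hu0 : nsq u ≤ 0 := by nlinarith [nsq_nonneg (Q *ᵥ u)]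
    rw [nrm_eq_sqrt_nsq, nrm_eq_sqrt_nsq, Real.sqrt_eq_zero'.2 hz0, Real.sqrt_eq_zero'.2 hu0,
      mul_zero]
  have hQu : Qᵀ *ᵥ (Q *ᵥ u) = Q *ᵥ u := by rw [hQt, mulVec_mulVec, hQ.eq]
  calc nrm (restr Δ (Q *ᵥ u)) ≤ √γ * nrm (Q *ᵥ u) := by
        simpa only [hQu] using nrm_restr_transpose_mulVec_le Q (Q *ᵥ u) Δ (Real.sqrt_nonneg γ)
          (by rw [hQu]; exact nrm_le_sqrt_mul_of_nsq_le hz)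
    _ ≤ √γ * (√γ * nrm u) := by gcongr; exact nrm_le_sqrt_mul_of_nsq_le hu
    _ = γ * nrm u := by rw [← mul_assoc, Real.mul_self_sqrt hγ]

lemma nsq_one_sub_rowSpaceProj_mulVec (A : Matrix (Fin m) (Fin n) ℝ) (hpd : (A * Aᵀ).PosDef)
    (z : Fin n → ℝ) :
    nsq ((1 - rowSpaceProj A) *ᵥ z) = nsq z - nsq ((hpd.inv.posSemidef.sqrt * A) *ᵥ z) := by
  rw [nsq_one_sub_mulVec (transpose_rowSpaceProj A)
    (isIdempotentElem_rowSpaceProj A hpd.isUnit), nsq_mulVec,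
    PosSemidef.transpose_sqrt_mul_mul_sqrt_mul]
  rfl

lemma add_pinv_mulVec_sub_sub_eq (A : Matrix (Fin m) (Fin n) ℝ) (x μ : Fin n → ℝ)
    (e : Fin m → ℝ) :
    μ + (Aᵀ * (A * Aᵀ)⁻¹) *ᵥ (A *ᵥ x + e - A *ᵥ μ) - x =
      ((A * Aᵀ)⁻¹ * A)ᵀ *ᵥ e - (1 - rowSpaceProj A) *ᵥ (x - μ) := by
  have hpinv : ((A * Aᵀ)⁻¹ * A)ᵀ = Aᵀ * (A * Aᵀ)⁻¹ := by
    simp [transpose_mul, transpose_nonsing_inv]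
  simp only [hpinv, rowSpaceProj, sub_mulVec, one_mulVec, mulVec_sub, mulVec_add,
    ← mulVec_mulVec]
  abel

end ProjectionBounds

/-- thresholding lemma (Lemma `h` of the paper). -/
theorem stmt4 {M N : ℕ} (A : Matrix (Fin M) (Fin N) ℝ) (hpd : (A * Aᵀ).PosDef)
    (s s' t : ℕ) (x μ' : Fin N → ℝ) (e : Fin M → ℝ) (y : Fin M → ℝ)
    (hy : y = A.mulVec x + e) (hx : Sparse s x) (hμ : Sparse s' μ')
    (γ θ : ℝ)
    (hγ : ∀ z : Fin N → ℝ, Sparse (s + s' + t) z →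
      (1 - γ) * nsq z ≤ nsq ((hpd.inv.posSemidef.sqrt * A).mulVec z))
    (hθ : IsRIP ((A * Aᵀ)⁻¹ * A) (t + s) θ)
    (T : Finset (Fin N)) (hts : s ≤ t) (hT : T.card = t)
    (hTtop : ∀ i ∈ T, ∀ j ∉ T,
      |(μ' + (Aᵀ * (A * Aᵀ)⁻¹).mulVec (y - A.mulVec μ')) j| ≤
      |(μ' + (Aᵀ * (A * Aᵀ)⁻¹).mulVec (y - A.mulVec μ')) i|) :
    nrm (restr Tᶜ x) ≤
      Real.sqrt 2 * (γ * nrm (x - μ') + Real.sqrt (1 + θ) * nrm e) := by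
  set P := rowSpaceProj A
  set Δ := (T \ suppF x) ∪ (suppF x \ T)
  have hQ : ∀ z, Sparse (s + s' + t) z → nsq ((1 - P) *ᵥ z) ≤ γ * nsq z := fun z hz => by
    rw [nsq_one_sub_rowSpaceProj_mulVec A hpd]
    linarith [hγ z hz]
  have hΔ : Δ.card ≤ t + s := (card_union_le _ _).trans <|
    add_le_add (hT ▸ card_le_card sdiff_subset) ((card_le_card sdiff_subset).trans hx)
  calc nrm (restr Tᶜ x)
      ≤ √2 * nrm (restr Δ (μ' + (Aᵀ * (A * Aᵀ)⁻¹) *ᵥ (y - A *ᵥ μ') - x)) :=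
        nrm_restr_compl_le_of_top (hx.trans (hT ▸ hts)) hTtop
    _ ≤ √2 * (nrm (restr Δ ((1 - P) *ᵥ (x - μ'))) +
          nrm (restr Δ (((A * Aᵀ)⁻¹ * A)ᵀ *ᵥ e))) := by
        rw [hy, add_pinv_mulVec_sub_sub_eq, restr_sub, add_comm]
        gcongr
        exact nrm_sub_le _ _
    _ ≤ √2 * (γ * nrm (x - μ') + √(1 + θ) * nrm e) := by
        gcongr
        · exact nrm_restr_mulVec_le_of_isIdempotentElem (by simp [transpose_rowSpaceProj])
            (isIdempotentElem_rowSpaceProj A hpd.isUnit).one_sub _ _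
            (hQ _ ((sparse_sub hx hμ).mono (by omega))) (hQ _ (sparse_restr (by omega) _))
        · exact nrm_restr_transpose_mulVec_le _ _ _ (Real.sqrt_nonneg _)
            (nrm_le_sqrt_mul_of_nsq_le (hθ _ (sparse_restr hΔ _)).2)
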